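/- arXiv:1911.01250 — 6 statements merged into one kernel-verified Lean document; each statement's English description precedes it below -/
import Mathlib

section
/- Every complex root of p is real: if z ∈ ℂ satisfies (Tr T(z))² = 4(z−1)^{2k}, then Im z = 0. -/
open Polynomial Matrix

/-- The matrix `A_m(z)` with rows `(z + α β⁻¹, α + β)` and `(z(α⁻¹+β⁻¹), z + β α⁻¹)`. -/
noncomputable def aztecA (a b : ℝ) (z : ℂ) : Matrix (Fin 2) (Fin 2) ℂ :=
  !![z + (a : ℂ) * ((b : ℂ))⁻¹, (a : ℂ) + (b : ℂ);
     z * (((a : ℂ))⁻¹ + ((b : ℂ))⁻¹), z + (b : ℂ) * ((a : ℂ))⁻¹]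

/-- `T(z) = A_1(z) A_2(z) ⋯ A_k(z)`. -/
noncomputable def aztecT {k : ℕ} (α β : Fin k → ℝ) (z : ℂ) : Matrix (Fin 2) (Fin 2) ℂ :=
  (List.ofFn fun m => aztecA (α m) (β m) z).prod

/-!
Suppose `z` is not real and write `z = w²` with `Re w > 0`. Conjugation by `diag(1, w)` turns
`A_m(z)` into `C(w, α_m) C(w, β_m)` with `C(w, c) = !![w, c; c⁻¹, w]`, so `T(z)` is similar to a
product `Q` of `2k` such factors, each of determinant `z - 1`. For the indefinite Hermitian form
`q(x) = 2 Re (x̄₀ x₁)`, each factor maps the cone `q ≥ 0` (minus the origin) into itself and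
multiplies `q` by more than `|w|² + 1 = |z| + 1 ≥ |z - 1|`.
If the discriminant vanished, `Q` would have a double eigenvalue `μ` with `|μ|² = |z - 1|^{2k}`.
An eigenvector in the cone contradicts the expansion; otherwise there is a Jordan chain
`Q u = μ u + y`, `Q y = μ y` with `q u = 0` and `q y < 0`, and `Qⁿ u / μⁿ = u + (n / μ) y` would
have to stay in the cone although `q` on this line tends to `-∞`.
-/

open ComplexConjugate

noncomputable def crossForm (x : Fin 2 → ℂ) : ℝ := 2 * (conj (x 0) * x 1).re

lemma crossForm_zero : crossForm 0 = 0 := by simp [crossForm]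

lemma crossForm_smul (a : ℂ) (x : Fin 2 → ℂ) : crossForm (a • x) = ‖a‖ ^ 2 * crossForm x := by
  have : conj (a * x 0) * (a * x 1) = (‖a‖ ^ 2 : ℝ) * (conj (x 0) * x 1) := by
    rw [Complex.sq_norm, Complex.normSq_eq_conj_mul_self, map_mul]; ring
  simp only [crossForm, Pi.smul_apply, smul_eq_mul, this, Complex.re_ofReal_mul]
  ring

lemma crossForm_add_smul_le (x y : Fin 2 → ℂ) (t : ℂ) :
    crossForm (x + t • y) ≤
      crossForm x + 2 * (‖x 0‖ * ‖y 1‖ + ‖x 1‖ * ‖y 0‖) * ‖t‖ + crossForm y * ‖t‖ ^ 2 := by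
  have hexp : conj (x 0 + t * y 0) * (x 1 + t * y 1) = conj (x 0) * x 1 +
      (t * (conj (x 0) * y 1) + conj (t * (conj (x 1) * y 0))) +
      (‖t‖ ^ 2 : ℝ) * (conj (y 0) * y 1) := by
    rw [Complex.sq_norm, Complex.normSq_eq_conj_mul_self]
    simp only [map_add, map_mul, Complex.conj_conj]; ring
  have h1 := Complex.re_le_norm (t * (conj (x 0) * y 1))
  have h2 := Complex.re_le_norm (t * (conj (x 1) * y 0))
  simp only [norm_mul, Complex.norm_conj] at h1 h2
  simp only [crossForm, Pi.add_apply, Pi.smul_apply, smul_eq_mul, hexp, Complex.add_re,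
    Complex.conj_re, Complex.re_ofReal_mul]
  nlinarith

lemma exists_nat_add_mul_add_mul_sq_neg {a b c s : ℝ} (ha : 0 ≤ a) (hb : 0 ≤ b) (hc : c < 0)
    (hs : 0 < s) : ∃ n : ℕ, a + b * (n * s) + c * (n * s) ^ 2 < 0 := by
  obtain ⟨n, hn⟩ := exists_nat_gt ((1 + (a + b) / -c) / s)
  refine ⟨n, ?_⟩
  have hr : 1 + (a + b) / -c < n * s := (div_lt_iff₀ hs).mp hn
  have hr1 : 1 ≤ n * s := by linarith [div_nonneg (add_nonneg ha hb) (neg_pos.mpr hc).le]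
  have hlin : a + b < n * s * -c := by
    have := (div_lt_iff₀ (neg_pos.mpr hc)).mp (by linarith : (a + b) / -c < n * s)
    linarith
  nlinarith [mul_nonneg ha (sub_nonneg.mpr hr1)]

lemma Matrix.fin_two_sub_smul_one_mul_self_eq_zero {R : Type*} [CommRing R] [Nontrivial R]
    (M : Matrix (Fin 2) (Fin 2) R) {μ : R} (htr : M.trace = 2 * μ) (hdet : M.det = μ ^ 2) :
    (M - μ • 1) * (M - μ • 1) = 0 := by
  have := M.aeval_self_charpoly
  simp only [charpoly_fin_two, htr, hdet, map_mul, map_pow, map_add, aeval_sub, aeval_X, aeval_C,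
    Algebra.algebraMap_eq_smul_one, Algebra.mul_smul_comm, mul_one, Algebra.smul_mul_assoc,
    one_mul] at this
  rw [← this]
  simp only [sub_mul, mul_sub, smul_one_mul, mul_smul_one, sq]
  module

def ConeExpanding (c : ℝ) (M : Matrix (Fin 2) (Fin 2) ℂ) : Prop :=
  ∀ x, x ≠ 0 → 0 ≤ crossForm x → c * crossForm x < crossForm (M *ᵥ x)

namespace ConeExpanding

variable {c d : ℝ} {M N : Matrix (Fin 2) (Fin 2) ℂ} {x : Fin 2 → ℂ}

lemma crossForm_pos (hM : ConeExpanding c M) (hc : 0 ≤ c) (hx : x ≠ 0)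
    (hqx : 0 ≤ crossForm x) : 0 < crossForm (M *ᵥ x) :=
  (mul_nonneg hc hqx).trans_lt (hM x hx hqx)

lemma mulVec_ne_zero (hM : ConeExpanding c M) (hc : 0 ≤ c) (hx : x ≠ 0)
    (hqx : 0 ≤ crossForm x) : M *ᵥ x ≠ 0 := fun h ↦ by
  simpa [h, crossForm_zero] using hM.crossForm_pos hc hx hqx

lemma mul (hM : ConeExpanding c M) (hN : ConeExpanding d N) (hc : 0 ≤ c) (hd : 0 ≤ d) :
    ConeExpanding (c * d) (M * N) := by
  intro x hx hqx
  have hNx := hN x hx hqx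
  have hMNx := hM _ (hN.mulVec_ne_zero hd hx hqx) (hN.crossForm_pos hd hx hqx).le
  rw [← mulVec_mulVec]
  nlinarith [mul_le_mul_of_nonneg_left hNx.le hc]

lemma list_prod {l : List (Matrix (Fin 2) (Fin 2) ℂ)} (hl : l ≠ []) (hc : 0 ≤ c)
    (h : ∀ M ∈ l, ConeExpanding c M) : ConeExpanding (c ^ l.length) l.prod := by
  induction l with
  | nil => exact absurd rfl hl
  | cons M l ih =>
    rcases eq_or_ne l [] with rfl | hl'
    · simpa using h M (by simp)
    · rw [List.prod_cons, List.length_cons, pow_succ']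
      exact (h M (by simp)).mul (ih hl' fun N hN ↦ h N (by simp [hN])) hc (by positivity)

lemma false_of_mulVec_eq_smul (hM : ConeExpanding c M) {μ : ℂ} (hμ : ‖μ‖ ^ 2 ≤ c)
    (hx : x ≠ 0) (hqx : 0 ≤ crossForm x) (hMx : M *ᵥ x = μ • x) : False := by
  have := hM x hx hqx
  rw [hMx, crossForm_smul] at this
  nlinarith

lemma false_of_jordan_chain (hM : ConeExpanding c M) (hc : 0 ≤ c) {μ : ℂ} {u y : Fin 2 → ℂ}
    (hu : u ≠ 0) (hqu : 0 ≤ crossForm u) (hqy : crossForm y < 0)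
    (hMu : M *ᵥ u = μ • u + y) (hMy : M *ᵥ y = μ • y) : False := by
  rcases eq_or_ne μ 0 with rfl | hμ
  · have := hM.crossForm_pos hc hu hqu
    rw [hMu, zero_smul, zero_add] at this
    linarith
  have hstep (t : ℂ) : M *ᵥ (u + t • y) = μ • (u + (t + μ⁻¹) • y) := by
    rw [mulVec_add, mulVec_smul, hMu, hMy]
    simp only [smul_add, add_smul, smul_smul, mul_inv_cancel₀ hμ, one_smul, mul_comm t μ]
    abel
  have hcone (n : ℕ) :
      u + ((n : ℂ) * μ⁻¹) • y ≠ 0 ∧ 0 ≤ crossForm (u + ((n : ℂ) * μ⁻¹) • y) := by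
    induction n with
    | zero => simpa using ⟨hu, hqu⟩
    | succ n ih =>
      have hpos := hM.crossForm_pos hc ih.1 ih.2
      have hne := hM.mulVec_ne_zero hc ih.1 ih.2
      rw [hstep, crossForm_smul] at hpos
      rw [hstep] at hne
      push_cast
      rw [add_mul, one_mul]
      exact ⟨right_ne_zero_of_smul hne, nonneg_of_mul_nonneg_right hpos.le (by positivity)⟩
  obtain ⟨n, hn⟩ := exists_nat_add_mul_add_mul_sq_neg hqu
    (b := 2 * (‖u 0‖ * ‖y 1‖ + ‖u 1‖ * ‖y 0‖)) (by positivity) hqy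
    (norm_pos_iff.mpr (inv_ne_zero hμ))
  have hle := (hcone n).2.trans (crossForm_add_smul_le u y _)
  rw [norm_mul, Complex.norm_natCast] at hle
  linarith

lemma trace_sq_ne_four_mul_det (hM : ConeExpanding c M) (hdet : ‖M.det‖ ≤ c) :
    M.trace ^ 2 ≠ 4 * M.det := by
  intro h
  set μ := M.trace / 2
  have hμ2 : M.det = μ ^ 2 := by linear_combination -h / 4
  have hμ : ‖μ‖ ^ 2 ≤ c := by rwa [← norm_pow, ← hμ2]
  have hc : 0 ≤ c := (norm_nonneg _).trans hdet
  have hN := fin_two_sub_smul_one_mul_self_eq_zero M (by ring : M.trace = 2 * μ) hμ2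
  set u : Fin 2 → ℂ := ![1, 0]
  have hu : u ≠ 0 := fun h ↦ by simpa [u] using congrFun h 0
  have hqu : crossForm u = 0 := by simp [crossForm, u]
  have hMu : M *ᵥ u = μ • u + (M - μ • 1) *ᵥ u := by
    rw [sub_mulVec, smul_mulVec, one_mulVec]; abel
  set y := (M - μ • 1) *ᵥ u
  have hMy : M *ᵥ y = μ • y := by
    have : (M - μ • 1) *ᵥ y = 0 := by rw [mulVec_mulVec, hN, zero_mulVec]
    rwa [sub_mulVec, smul_mulVec, one_mulVec, sub_eq_zero] at this
  rcases eq_or_ne y 0 with hy | hy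
  · exact hM.false_of_mulVec_eq_smul hμ hu hqu.ge (by rw [hMu, hy, add_zero])
  rcases le_or_gt 0 (crossForm y) with hqy | hqy
  · exact hM.false_of_mulVec_eq_smul hμ hy hqy hMy
  · exact hM.false_of_jordan_chain hc hu hqu.ge hqy hMu hMy

end ConeExpanding

lemma SemiconjBy.list_prod_map {M ι : Type*} [Monoid M] {a : M} {f g : ι → M} (l : List ι)
    (h : ∀ i ∈ l, SemiconjBy a (f i) (g i)) : SemiconjBy a (l.map f).prod (l.map g).prod := by
  induction l with
  | nil => exact SemiconjBy.one_right a
  | cons i l ih =>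
    simp only [List.map_cons, List.prod_cons]
    exact (h i (by simp)).mul_right (ih fun j hj ↦ h j (by simp [hj]))

noncomputable def aztecC (w : ℂ) (c : ℝ) : Matrix (Fin 2) (Fin 2) ℂ :=
  !![w, (c : ℂ); (c : ℂ)⁻¹, w]

noncomputable def aztecQ {k : ℕ} (α β : Fin k → ℝ) (w : ℂ) : Matrix (Fin 2) (Fin 2) ℂ :=
  (List.ofFn fun m ↦ aztecC w (α m) * aztecC w (β m)).prod

lemma det_aztecC (w : ℂ) {c : ℝ} (hc : c ≠ 0) : (aztecC w c).det = w ^ 2 - 1 := by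
  rw [aztecC, det_fin_two_of, mul_inv_cancel₀ (Complex.ofReal_ne_zero.mpr hc), sq]

lemma crossForm_aztecC_mulVec (w : ℂ) {c : ℝ} (hc : c ≠ 0) (x : Fin 2 → ℂ) :
    crossForm (aztecC w c *ᵥ x) =
      (‖w‖ ^ 2 + 1) * crossForm x + 2 * w.re * (c⁻¹ * ‖x 0‖ ^ 2 + c * ‖x 1‖ ^ 2) := by
  simp only [aztecC, crossForm, mulVec, dotProduct, Fin.sum_univ_two, of_apply, cons_val',
    cons_val_zero, cons_val_one, empty_val', cons_val_fin_one, Complex.sq_norm,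
    Complex.normSq_apply, ← Complex.ofReal_inv, map_add, map_mul, Complex.mul_re,
    Complex.add_re, Complex.add_im, Complex.mul_im, Complex.conj_re, Complex.conj_im,
    Complex.ofReal_re, Complex.ofReal_im]
  linear_combination 2 * ((x 0).re * (x 1).re + (x 0).im * (x 1).im) * mul_inv_cancel₀ hc

lemma coneExpanding_aztecC {w : ℂ} (hw : 0 < w.re) {c : ℝ} (hc : 0 < c) :
    ConeExpanding (‖w‖ ^ 2 + 1) (aztecC w c) := by
  intro x hx hqx
  rw [crossForm_aztecC_mulVec w hc.ne']
  have : 0 < c⁻¹ * ‖x 0‖ ^ 2 + c * ‖x 1‖ ^ 2 := by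
    obtain ⟨i, hi⟩ := Function.ne_iff.mp hx
    have := norm_pos_iff.mpr hi
    fin_cases i <;> positivity
  nlinarith

lemma aztecA_sq_mul_diag (w : ℂ) {a b : ℝ} (ha : a ≠ 0) (hb : b ≠ 0) :
    aztecA a b (w ^ 2) * !![1, 0; 0, w] = !![1, 0; 0, w] * (aztecC w a * aztecC w b) := by
  have ha' : (a : ℂ) ≠ 0 := Complex.ofReal_ne_zero.mpr ha
  have hb' : (b : ℂ) ≠ 0 := Complex.ofReal_ne_zero.mpr hb
  rw [aztecA, aztecC, aztecC, mul_fin_two, mul_fin_two, mul_fin_two]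
  ext i j
  fin_cases i <;> fin_cases j <;>
    simp only [mul_one, mul_zero, add_zero, zero_add, one_mul, zero_mul, Fin.zero_eta, Fin.mk_one,
      Fin.isValue, of_apply, cons_val', cons_val_zero, cons_val_one, cons_val_fin_one] <;>
    field_simp <;> ring

lemma trace_aztecT_sq {k : ℕ} {α β : Fin k → ℝ} (hα : ∀ m, α m ≠ 0) (hβ : ∀ m, β m ≠ 0)
    {w : ℂ} (hw : w ≠ 0) : (aztecT α β (w ^ 2)).trace = (aztecQ α β w).trace := by
  set D : Matrix (Fin 2) (Fin 2) ℂ := !![1, 0; 0, w]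
  have hD : IsUnit D.det := by simpa [D, det_fin_two_of] using hw
  have hsemi : SemiconjBy D (aztecQ α β w) (aztecT α β (w ^ 2)) := by
    rw [aztecT, aztecQ, List.ofFn_eq_map, List.ofFn_eq_map]
    exact SemiconjBy.list_prod_map _ fun m _ ↦ (aztecA_sq_mul_diag w (hα m) (hβ m)).symm
  rw [← mul_nonsing_inv_cancel_right D (aztecT α β (w ^ 2)) hD, ← hsemi.eq,
    trace_conj ((isUnit_iff_isUnit_det D).mpr hD)]

lemma det_aztecQ {k : ℕ} {α β : Fin k → ℝ} (hα : ∀ m, α m ≠ 0) (hβ : ∀ m, β m ≠ 0) (w : ℂ) :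
    (aztecQ α β w).det = (w ^ 2 - 1) ^ (2 * k) := by
  rw [aztecQ, ← coe_detMonoidHom, map_list_prod, List.map_ofFn, List.prod_ofFn]
  simp [det_aztecC, hα, hβ, pow_mul, sq]

lemma coneExpanding_aztecQ {k : ℕ} (hk : k ≠ 0) {α β : Fin k → ℝ} (hα : ∀ m, 0 < α m)
    (hβ : ∀ m, 0 < β m) {w : ℂ} (hw : 0 < w.re) :
    ConeExpanding ((‖w‖ ^ 2 + 1) ^ (2 * k)) (aztecQ α β w) := by
  have := ConeExpanding.list_prod (c := (‖w‖ ^ 2 + 1) ^ 2)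
    (l := List.ofFn fun m ↦ aztecC w (α m) * aztecC w (β m)) (by simpa using hk) (by positivity)
    (by
      simp only [List.mem_ofFn, forall_exists_index]
      rintro _ m rfl
      rw [sq]
      exact (coneExpanding_aztecC hw (hα m)).mul (coneExpanding_aztecC hw (hβ m))
        (by positivity) (by positivity))
  simpa [aztecQ, pow_mul] using this

lemma exists_sq_eq_and_re_pos_of_im_ne_zero {z : ℂ} (hz : z.im ≠ 0) :
    ∃ w : ℂ, w ^ 2 = z ∧ 0 < w.re := by
  obtain ⟨w, hw⟩ := IsAlgClosed.exists_pow_nat_eq z two_pos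
  have hre : w.re ≠ 0 := fun h ↦ hz (by simp [← hw, sq, h])
  rcases hre.lt_or_gt with h | h
  · exact ⟨-w, by rw [neg_sq, hw], by simpa using h⟩
  · exact ⟨w, hw, h⟩

theorem stmt0_general (k : ℕ) (hk : 1 ≤ k) (α β : Fin k → ℝ)
    (hα : ∀ m, 0 < α m) (hβ : ∀ m, 0 < β m)
    (z : ℂ)
    (hz : (Matrix.trace (aztecT α β z)) ^ 2 = 4 * (z - 1) ^ (2 * k)) :
    z.im = 0 := by
  by_contra him
  obtain ⟨w, rfl, hw⟩ := exists_sq_eq_and_re_pos_of_im_ne_zero him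
  have hw0 : w ≠ 0 := by rintro rfl; simp at hw
  have hα0 m : α m ≠ 0 := (hα m).ne'
  have hβ0 m : β m ≠ 0 := (hβ m).ne'
  have hnorm : ‖w ^ 2 - 1‖ ≤ ‖w‖ ^ 2 + 1 :=
    (norm_sub_le _ _).trans_eq (by rw [norm_pow, norm_one])
  refine (coneExpanding_aztecQ (by omega) hα hβ hw).trace_sq_ne_four_mul_det ?_ ?_
  · rw [det_aztecQ hα0 hβ0, norm_pow]
    gcongr
  · rw [← trace_aztecT_sq hα0 hβ0 hw0, hz, det_aztecQ hα0 hβ0]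

/-- every complex root of the discriminant is real:
if `(Tr T(z))² = 4 (z−1)^{2k}` then `Im z = 0`. -/
theorem stmt0 (k : ℕ) (hk : 1 ≤ k) (α β : Fin k → ℝ)
    (hα : ∀ m, 0 < α m) (hβ : ∀ m, 0 < β m)
    (hprod : ∏ m, α m = ∏ m, β m)
    (z : ℂ)
    (hz : (Matrix.trace (aztecT α β z)) ^ 2 = 4 * (z - 1) ^ (2 * k)) :
    z.im = 0 :=
  stmt0_general k hk α β hα hβ z hz
end

section
/- Tr T, regarded as a polynomial in ℝ[X], has degree k, leading coefficient 2, and all coefficients positive. Moreover both polynomials p₊ := Tr T + 2(X−1)^k and p₋ := Tr T − 2(X−1)^k have all coefficients nonnegative, with deg p₊ = k and deg p₋ = k−1; consequently p = p₊ · p₋ has nonnegative coefficients. -/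
/-!
Replacing `z` by the indeterminate `X` makes each `A_m` a matrix of polynomials with nonnegative
coefficients whose diagonal entries are `X + c_m` and `X + c_m⁻¹`, where `c_m = α_m / β_m`.
Expanding the product, every diagonal entry of `T` dominates (coefficientwise) the product of the
corresponding diagonal entries, so `Tr T ≥ ∏ (X + c_m) + ∏ (X + c_m⁻¹) ≥ 2 (X + 1)^k`, the last step
being AM-GM `c + c⁻¹ ≥ 2` applied one factor at a time. Since `(X + 1)^k ± (X - 1)^k` have
nonnegative coefficients, so do `p₊` and `p₋`. The degree-one coefficients of the `A_m` are lower
unitriangular, hence so is their product, which is the coefficient of `X^k` in `T`; so `Tr T` has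
leading term `2 X^k`, which cancels in `p₋`.
-/

open Polynomial Matrix

namespace Polynomial

section NonnegCoeffs

variable (R : Type*) [Semiring R] [PartialOrder R] [IsOrderedRing R]

def nonnegCoeffs : Subsemiring R[X] where
  carrier := {p | ∀ n, 0 ≤ p.coeff n}
  mul_mem' {p q} hp hq n := by
    rw [coeff_mul]
    exact Finset.sum_nonneg fun x _ => mul_nonneg (hp _) (hq _)
  one_mem' n := by
    rw [coeff_one]
    split_ifs <;> simp
  add_mem' {p q} hp hq n := by
    rw [coeff_add]
    exact add_nonneg (hp n) (hq n)
  zero_mem' n := by simp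

variable {R}

theorem mem_nonnegCoeffs {p : R[X]} : p ∈ nonnegCoeffs R ↔ ∀ n, 0 ≤ p.coeff n := Iff.rfl

theorem C_mem_nonnegCoeffs {c : R} (hc : 0 ≤ c) : C c ∈ nonnegCoeffs R := fun n => by
  rw [coeff_C]
  split_ifs <;> simp [hc]

theorem X_mem_nonnegCoeffs : (X : R[X]) ∈ nonnegCoeffs R := fun n => by
  rw [coeff_X]
  split_ifs <;> simp

end NonnegCoeffs

theorem X_add_one_pow_add_X_sub_one_pow_mem_nonnegCoeffs {R : Type*} [CommRing R]
    [PartialOrder R] [IsOrderedRing R] (k : ℕ) :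
    (X + 1) ^ k + (X - 1) ^ k ∈ nonnegCoeffs R ∧ (X + 1) ^ k - (X - 1) ^ k ∈ nonnegCoeffs R := by
  induction k with
  | zero => simp [one_add_one_eq_two]
  | succ k ih =>
    constructor
    · convert add_mem (mul_mem X_mem_nonnegCoeffs ih.1) ih.2 using 1; ring
    · convert add_mem (mul_mem X_mem_nonnegCoeffs ih.2) ih.1 using 1; ring

/- The weight `t` makes the induction go through: multiplying in the factors `X + C c` and
`X + C c⁻¹` produces the same expression with weights `t` (times `X`) and `t * c`. -/
theorem C_mul_prod_X_add_C_add_C_inv_mul_prod_X_add_C_inv_sub_mem_nonnegCoeffs {ι K : Type*}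
    [Field K] [LinearOrder K] [IsStrictOrderedRing K] (s : Finset ι) (c : ι → K)
    (hc : ∀ m ∈ s, 0 < c m) {t : K} (ht : 0 < t) :
    C t * ∏ m ∈ s, (X + C (c m)) + C t⁻¹ * ∏ m ∈ s, (X + C (c m)⁻¹) - 2 * (X + 1) ^ s.card
      ∈ nonnegCoeffs K := by
  classical
  induction s using Finset.induction_on generalizing t with
  | empty =>
    have amgm : 0 ≤ t + t⁻¹ - 2 := by
      have := mul_inv_cancel₀ ht.ne'
      nlinarith [sq_nonneg (t - 1), inv_pos.2 ht]
    convert C_mem_nonnegCoeffs amgm using 1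
    simp [← map_ofNat C 2]
  | insert a s ha ih =>
    have hs : ∀ m ∈ s, 0 < c m := fun m hm => hc m (Finset.mem_insert_of_mem hm)
    have hca := hc a (Finset.mem_insert_self a s)
    convert add_mem (mul_mem X_mem_nonnegCoeffs (ih hs ht)) (ih hs (mul_pos ht hca)) using 1
    rw [Finset.prod_insert ha, Finset.prod_insert ha, Finset.card_insert_of_notMem ha, mul_inv,
      C_mul, C_mul]
    ring

theorem add_two_mul_X_sub_one_pow_mem_nonnegCoeffs {R : Type*} [CommRing R] [PartialOrder R]
    [IsOrderedRing R] {q : R[X]} {k : ℕ} (hq : q - 2 * (X + 1) ^ k ∈ nonnegCoeffs R) :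
    q + 2 * (X - 1) ^ k ∈ nonnegCoeffs R ∧ q - 2 * (X - 1) ^ k ∈ nonnegCoeffs R := by
  obtain ⟨hsum, hdiff⟩ := X_add_one_pow_add_X_sub_one_pow_mem_nonnegCoeffs (R := R) k
  constructor
  · convert add_mem hq (mul_mem (ofNat_mem _ 2) hsum) using 1; ring
  · convert add_mem hq (mul_mem (ofNat_mem _ 2) hdiff) using 1; ring

theorem coeff_pos_of_sub_two_mul_X_add_one_pow_mem_nonnegCoeffs {R : Type*} [CommRing R]
    [PartialOrder R] [IsStrictOrderedRing R] {q : R[X]} {k i : ℕ}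
    (hq : q - 2 * (X + 1) ^ k ∈ nonnegCoeffs R) (hi : i ≤ k) : 0 < q.coeff i := by
  have h := mem_nonnegCoeffs.1 hq i
  rw [coeff_sub, coeff_ofNat_mul, coeff_X_add_one_pow, sub_nonneg] at h
  exact (mul_pos two_pos (Nat.cast_pos.2 (Nat.choose_pos hi))).trans_le h

theorem coeff_X_sub_one_pow {R : Type*} [CommRing R] (k i : ℕ) :
    ((X - 1 : R[X]) ^ k).coeff i = (-1) ^ (k - i) * k.choose i := by
  rw [← coeff_X_add_C_pow, C_neg, C_1, sub_eq_add_neg]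

theorem natDegree_add_two_mul_X_sub_one_pow {R : Type*} [CommRing R] [CharZero R]
    {q : R[X]} {k : ℕ} (hq : q.natDegree ≤ k) (hk : q.coeff k = 2) :
    (q + 2 * (X - 1) ^ k).natDegree = k := by
  refine natDegree_eq_of_le_of_coeff_ne_zero (natDegree_add_le_of_degree_le hq ?_) ?_
  · compute_degree
  · simp [hk, coeff_X_sub_one_pow]
    norm_num

theorem natDegree_sub_two_mul_X_sub_one_pow {R : Type*} [CommRing R] [PartialOrder R]
    [IsStrictOrderedRing R] {q : R[X]} {k : ℕ} (hk1 : 1 ≤ k) (hq : q.natDegree ≤ k)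
    (hk : q.coeff k = 2) (hq' : 0 ≤ q.coeff (k - 1)) :
    (q - 2 * (X - 1) ^ k).natDegree = k - 1 := by
  refine natDegree_eq_of_le_of_coeff_ne_zero (natDegree_le_pred ?_ ?_) ?_
  · exact (natDegree_sub_le_of_le hq (by compute_degree)).trans (max_self k).le
  · simp [hk, coeff_X_sub_one_pow]
  · obtain ⟨j, rfl⟩ : ∃ j, k = j + 1 := ⟨k - 1, by omega⟩
    have hcoeff : ((X - 1 : R[X]) ^ (j + 1)).coeff j = -(j + 1) := by
      simp [coeff_X_sub_one_pow]
    rw [add_tsub_cancel_right] at hq' ⊢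
    rw [coeff_sub, coeff_ofNat_mul, hcoeff, mul_neg, sub_neg_eq_add]
    exact (add_pos_of_nonneg_of_pos hq' (by positivity)).ne'

theorem eq_of_forall_aeval_eq {K L : Type*} [Field K] [Field L] [Infinite L] [Algebra K L]
    {p q : K[X]} (h : ∀ z : L, aeval z p = aeval z q) : p = q := by
  refine map_injective _ (algebraMap K L).injective (Polynomial.funext fun z => ?_)
  simpa [eval_map_algebraMap] using h z

section MatrixPolynomial

variable {n R : Type*} [Fintype n] [DecidableEq n] [CommSemiring R]

theorem coeff_trace (M : Matrix n n R[X]) (N : ℕ) :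
    M.trace.coeff N = ((matPolyEquiv M).coeff N).trace := by
  rw [← lcoeff_apply, AddMonoidHom.map_trace]
  congr 1
  ext i j
  rw [matPolyEquiv_coeff_apply, map_apply, lcoeff_apply]

theorem natDegree_matPolyEquiv_le {M : Matrix n n R[X]} {d : ℕ}
    (h : ∀ i j, (M i j).natDegree ≤ d) : (matPolyEquiv M).natDegree ≤ d :=
  natDegree_le_iff_coeff_eq_zero.2 fun N hN => by
    ext i j
    rw [matPolyEquiv_coeff_apply, Matrix.zero_apply]
    exact coeff_eq_zero_of_natDegree_lt ((h i j).trans_lt hN)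

end MatrixPolynomial

end Polynomial

namespace Matrix

variable {n : Type*} [Fintype n] [DecidableEq n]

theorem list_prod_apply_mem {R : Type*} [Ring R] (S : Subsemiring R) {l : List (Matrix n n R)}
    (hl : ∀ M ∈ l, ∀ i j, M i j ∈ S) (i j : n) : l.prod i j ∈ S := by
  induction l generalizing i j with
  | nil =>
    rw [List.prod_nil, one_apply]
    split_ifs
    exacts [S.one_mem, S.zero_mem]
  | cons M l ih =>
    rw [List.prod_cons, mul_apply]
    have hl' := fun N hN => hl N (List.mem_cons_of_mem M hN)
    exact S.sum_mem fun x _ => S.mul_mem (hl M List.mem_cons_self i x) (ih hl' x j)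

theorem list_prod_apply_self_sub_mem {R : Type*} [Ring R] (S : Subsemiring R)
    {l : List (Matrix n n R)} (hl : ∀ M ∈ l, ∀ i j, M i j ∈ S) (i : n) :
    l.prod i i - (l.map fun M => M i i).prod ∈ S := by
  induction l with
  | nil => simp
  | cons M l ih =>
    have hl' := fun N hN => hl N (List.mem_cons_of_mem M hN)
    have hM := hl M List.mem_cons_self
    rw [List.prod_cons, List.map_cons, List.prod_cons, mul_apply,
      ← Finset.add_sum_erase _ _ (Finset.mem_univ i)]
    convert S.add_mem (S.mul_mem (hM i i) (ih hl'))
      (S.sum_mem fun x _ => S.mul_mem (hM i x) (list_prod_apply_mem S hl' x i)) using 1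
    noncomm_ring

theorem list_prod_map_transvection {R : Type*} [CommRing R] {i j : n} (hij : i ≠ j)
    (l : List R) : (l.map (transvection i j)).prod = transvection i j l.sum := by
  induction l with
  | nil => simp
  | cons c l ih =>
    rw [List.map_cons, List.prod_cons, ih, List.sum_cons,
      transvection_mul_transvection_same _ _ hij]

end Matrix

noncomputable def aztecPolyA (a b : ℝ) : Matrix (Fin 2) (Fin 2) ℝ[X] :=
  !![X + C (a / b), C (a + b); X * C (a⁻¹ + b⁻¹), X + C (b / a)]

noncomputable def aztecPolyT {k : ℕ} (α β : Fin k → ℝ) : Matrix (Fin 2) (Fin 2) ℝ[X] :=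
  (List.ofFn fun m => aztecPolyA (α m) (β m)).prod

theorem aeval_trace_aztecPolyT {k : ℕ} (α β : Fin k → ℝ) (z : ℂ) :
    aeval z (aztecPolyT α β).trace = (aztecT α β z).trace := by
  have hA : ∀ a b, (aeval z).mapMatrix (aztecPolyA a b) = aztecA a b z := fun a b => by
    ext i j
    fin_cases i <;> fin_cases j <;> simp [aztecPolyA, aztecA, div_eq_mul_inv]
  rw [AddMonoidHom.map_trace, ← AlgHom.mapMatrix_apply, aztecPolyT, map_list_prod,
    List.map_ofFn]
  simp only [Function.comp_def, hA, aztecT]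

theorem aztecPolyA_apply_mem_nonnegCoeffs {a b : ℝ} (ha : 0 < a) (hb : 0 < b) (i j : Fin 2) :
    aztecPolyA a b i j ∈ nonnegCoeffs ℝ := by
  fin_cases i <;> fin_cases j <;>
    simp only [aztecPolyA, Fin.zero_eta, Fin.mk_one, of_apply, cons_val', cons_val_zero,
      cons_val_one, empty_val', cons_val_fin_one] <;>
    apply_rules [add_mem, mul_mem, X_mem_nonnegCoeffs, C_mem_nonnegCoeffs] <;>
    positivity

theorem natDegree_matPolyEquiv_aztecPolyA_le (a b : ℝ) :
    (matPolyEquiv (aztecPolyA a b)).natDegree ≤ 1 :=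
  natDegree_matPolyEquiv_le fun i j => by
    fin_cases i <;> fin_cases j <;> simp [aztecPolyA]
    all_goals compute_degree

theorem matPolyEquiv_aztecPolyA_coeff_one (a b : ℝ) :
    (matPolyEquiv (aztecPolyA a b)).coeff 1 = transvection 1 0 (a⁻¹ + b⁻¹) := by
  ext i j
  rw [matPolyEquiv_coeff_apply]
  fin_cases i <;> fin_cases j <;> simp [aztecPolyA, transvection, coeff_X, coeff_C]

section AztecPolyT

variable {k : ℕ} (α β : Fin k → ℝ)

theorem matPolyEquiv_aztecPolyT :
    matPolyEquiv (aztecPolyT α β)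
      = (List.ofFn fun m => matPolyEquiv (aztecPolyA (α m) (β m))).prod := by
  rw [aztecPolyT, map_list_prod, List.map_ofFn]
  rfl

theorem natDegree_trace_aztecPolyT_le : (aztecPolyT α β).trace.natDegree ≤ k := by
  have hdeg : (matPolyEquiv (aztecPolyT α β)).natDegree ≤ k := by
    rw [matPolyEquiv_aztecPolyT]
    refine (natDegree_list_prod_le _).trans ?_
    simpa using List.sum_le_card_nsmul _ 1 (List.forall_mem_map.2
      (List.forall_mem_ofFn_iff.2 fun m => natDegree_matPolyEquiv_aztecPolyA_le _ _))
  exact natDegree_le_iff_coeff_eq_zero.2 fun N hN => by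
    rw [coeff_trace, coeff_eq_zero_of_natDegree_lt (hdeg.trans_lt hN), trace_zero]

theorem coeff_trace_aztecPolyT_self : (aztecPolyT α β).trace.coeff k = 2 := by
  have h := coeff_list_prod_of_natDegree_le _ 1
    (List.forall_mem_ofFn_iff.2 fun m => natDegree_matPolyEquiv_aztecPolyA_le (α m) (β m))
  have ht := list_prod_map_transvection (by decide : (1 : Fin 2) ≠ 0)
    (List.ofFn fun m => (α m)⁻¹ + (β m)⁻¹)
  rw [List.length_ofFn, mul_one, List.map_ofFn] at h
  rw [List.map_ofFn] at ht
  rw [coeff_trace, matPolyEquiv_aztecPolyT, h]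
  simp only [Function.comp_def, matPolyEquiv_aztecPolyA_coeff_one] at ht ⊢
  rw [ht]
  simp [transvection]

variable {α β}

theorem trace_aztecPolyT_sub_mem_nonnegCoeffs (hα : ∀ m, 0 < α m) (hβ : ∀ m, 0 < β m) :
    (aztecPolyT α β).trace - (∏ m, (X + C (α m / β m)) + ∏ m, (X + C (α m / β m)⁻¹))
      ∈ nonnegCoeffs ℝ := by
  have hl : ∀ M ∈ List.ofFn (fun m => aztecPolyA (α m) (β m)), ∀ i j, M i j ∈ nonnegCoeffs ℝ :=
    List.forall_mem_ofFn_iff.2 fun m => aztecPolyA_apply_mem_nonnegCoeffs (hα m) (hβ m)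
  have h0 := list_prod_apply_self_sub_mem _ hl 0
  have h1 := list_prod_apply_self_sub_mem _ hl 1
  rw [List.map_ofFn, List.prod_ofFn] at h0 h1
  convert add_mem h0 h1 using 1
  simp [aztecPolyT, trace_fin_two, aztecPolyA, inv_div]
  ring

theorem trace_aztecPolyT_sub_two_mul_X_add_one_pow_mem_nonnegCoeffs (hα : ∀ m, 0 < α m)
    (hβ : ∀ m, 0 < β m) : (aztecPolyT α β).trace - 2 * (X + 1) ^ k ∈ nonnegCoeffs ℝ := by
  have amgm := C_mul_prod_X_add_C_add_C_inv_mul_prod_X_add_C_inv_sub_mem_nonnegCoeffs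
    Finset.univ (fun m => α m / β m) (fun m _ => div_pos (hα m) (hβ m)) one_pos
  convert add_mem (trace_aztecPolyT_sub_mem_nonnegCoeffs hα hβ) amgm using 1
  simp

end AztecPolyT

/-- `Tr T` has degree `k`, leading coefficient `2` and positive coefficients;
`p₊ = Tr T + 2(X−1)^k` and `p₋ = Tr T − 2(X−1)^k` have nonnegative coefficients and degrees
`k` and `k−1`; and `p = p₊ · p₋` has nonnegative coefficients. -/
theorem stmt3 (k : ℕ) (hk : 1 ≤ k) (α β : Fin k → ℝ)
    (hα : ∀ m, 0 < α m) (hβ : ∀ m, 0 < β m)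
    (trT p : Polynomial ℝ)
    (htr : ∀ z : ℂ, Polynomial.aeval z trT = Matrix.trace (aztecT α β z))
    (hp : ∀ z : ℂ, Polynomial.aeval z p
        = (Matrix.trace (aztecT α β z)) ^ 2 - 4 * (z - 1) ^ (2 * k)) :
    trT.natDegree = k ∧
    trT.leadingCoeff = 2 ∧
    (∀ i ≤ k, 0 < trT.coeff i) ∧
    (∀ i, 0 ≤ (trT + 2 * (X - 1) ^ k).coeff i) ∧
    (trT + 2 * (X - 1) ^ k).natDegree = k ∧
    (∀ i, 0 ≤ (trT - 2 * (X - 1) ^ k).coeff i) ∧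
    (trT - 2 * (X - 1) ^ k).natDegree = k - 1 ∧
    p = (trT + 2 * (X - 1) ^ k) * (trT - 2 * (X - 1) ^ k) ∧
    (∀ i, 0 ≤ p.coeff i) := by
  have htrT : trT = (aztecPolyT α β).trace :=
    eq_of_forall_aeval_eq fun z => (htr z).trans (aeval_trace_aztecPolyT α β z).symm
  have hdeg : trT.natDegree ≤ k := htrT ▸ natDegree_trace_aztecPolyT_le α β
  have htop : trT.coeff k = 2 := htrT ▸ coeff_trace_aztecPolyT_self α β
  have hnatDegree : trT.natDegree = k := natDegree_eq_of_le_of_coeff_ne_zero hdeg (by simp [htop])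
  have hbound : trT - 2 * (X + 1) ^ k ∈ nonnegCoeffs ℝ :=
    htrT ▸ trace_aztecPolyT_sub_two_mul_X_add_one_pow_mem_nonnegCoeffs hα hβ
  have hpos : ∀ i ≤ k, 0 < trT.coeff i := fun i hi =>
    coeff_pos_of_sub_two_mul_X_add_one_pow_mem_nonnegCoeffs hbound hi
  obtain ⟨hplus, hminus⟩ := add_two_mul_X_sub_one_pow_mem_nonnegCoeffs hbound
  have hfactor : p = (trT + 2 * (X - 1) ^ k) * (trT - 2 * (X - 1) ^ k) :=
    eq_of_forall_aeval_eq fun z => by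
      rw [hp, ← htr]
      simp only [_root_.map_mul, _root_.map_add, map_sub, map_pow, _root_.map_ofNat, aeval_X,
        _root_.map_one]
      ring
  exact ⟨hnatDegree, by rw [leadingCoeff, hnatDegree, htop], hpos, mem_nonnegCoeffs.1 hplus,
    natDegree_add_two_mul_X_sub_one_pow hdeg htop, mem_nonnegCoeffs.1 hminus,
    natDegree_sub_two_mul_X_sub_one_pow hk hdeg htop (hpos _ (Nat.sub_le k 1)).le, hfactor,
    mem_nonnegCoeffs.1 (hfactor ▸ mul_mem hplus hminus)⟩
end

section
/- For every real x < 0 with p(x) ≤ 0, every λ ∈ ℂ satisfying (x−1)^k λ² − Tr T(x) λ + (x−1)^k = 0 has |λ| = 1; that is, on the bands {x < 0 : p(x) ≤ 0} both eigenvalues of Φ(x) lie on the unit circle. -/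
open Polynomial Matrix

/-!
At a real point `x` every `A_m(x)` is a real matrix, so `Tr T(x)` is real, and `p(x) ≤ 0` says
that the palindromic quadratic `c λ² - t λ + c` with real `c = (x-1)^k ≠ 0`, `t = Tr T(x)` has
nonpositive discriminant `t² - 4c²`. Its roots are then either a double real root `±1` or a pair
of conjugates with product `1`; in both cases they lie on the unit circle.
-/

/- Writing `z = a + bi`, the imaginary part of the equation gives `b (2ca - t) = 0`; when
`b = 0` the real part gives `(2ca - t)² = t² - 4c² ≤ 0`. So `2ca = t` in both cases, and then
the real part reads `c (1 - a² - b²) = 0`. -/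
theorem Complex.norm_eq_one_of_quadratic_root {c t : ℝ} (hc : c ≠ 0) (ht : t ^ 2 ≤ 4 * c ^ 2)
    {z : ℂ} (hz : c * z ^ 2 - t * z + c = 0) : ‖z‖ = 1 := by
  have hre : c * (z.re ^ 2 - z.im ^ 2) - t * z.re + c = 0 := by
    simpa [sq] using congrArg Complex.re hz
  have him : z.im * (2 * c * z.re - t) = 0 := by
    linear_combination (by simpa [sq] using congrArg Complex.im hz :
      c * (z.re * z.im + z.im * z.re) - t * z.im = 0)
  have hvertex : 2 * c * z.re = t := by
    rcases mul_eq_zero.mp him with hb | hb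
    · have hsq : (2 * c * z.re - t) ^ 2 ≤ 0 := by
        rw [hb] at hre
        linear_combination (4 * c) * hre + ht
      exact sub_eq_zero.mp (pow_eq_zero_iff two_ne_zero |>.mp (hsq.antisymm (sq_nonneg _)))
    · linarith
  have hnormSq : Complex.normSq z = 1 := by
    rw [Complex.normSq_apply]
    apply mul_left_cancel₀ hc
    linear_combination -hre + z.re * hvertex
  rw [Complex.norm_def, hnormSq, Real.sqrt_one]

lemma aztecA_map_conj (a b x : ℝ) :
    (starRingEnd ℂ).mapMatrix (aztecA a b x) = aztecA a b x := by
  ext i j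
  fin_cases i <;> fin_cases j <;> simp [aztecA]

lemma aztecT_map_conj {k : ℕ} (α β : Fin k → ℝ) (x : ℝ) :
    (starRingEnd ℂ).mapMatrix (aztecT α β x) = aztecT α β x := by
  simp only [aztecT, map_list_prod, List.map_ofFn, Function.comp_def, aztecA_map_conj]

lemma conj_trace_aztecT {k : ℕ} (α β : Fin k → ℝ) (x : ℝ) :
    starRingEnd ℂ (aztecT α β x).trace = (aztecT α β x).trace := by
  conv_rhs => rw [← aztecT_map_conj α β x]
  simp [Matrix.trace]

theorem stmt5_general (k : ℕ) (α β : Fin k → ℝ)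
    (p : Polynomial ℝ)
    (hp : ∀ z : ℂ, Polynomial.aeval z p
        = (Matrix.trace (aztecT α β z)) ^ 2 - 4 * (z - 1) ^ (2 * k))
    (x : ℝ) (hx : x < 0) (hpx : p.eval x ≤ 0) :
    ∀ lam : ℂ,
      ((x : ℂ) - 1) ^ k * lam ^ 2 - Matrix.trace (aztecT α β (x : ℂ)) * lam
          + ((x : ℂ) - 1) ^ k = 0 →
      ‖lam‖ = 1 := by
  intro lam hlam
  obtain ⟨t, ht⟩ : ∃ t : ℝ, (aztecT α β x).trace = t :=
    ⟨_, (Complex.conj_eq_iff_re.mp (conj_trace_aztecT α β x)).symm⟩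
  have hpeval : p.eval x = t ^ 2 - 4 * ((x - 1) ^ k) ^ 2 := by
    apply Complex.ofReal_injective
    rw [show ((p.eval x : ℝ) : ℂ) = aeval (x : ℂ) p from ofReal_eval p x, hp, ht]
    push_cast
    ring
  refine Complex.norm_eq_one_of_quadratic_root (c := (x - 1) ^ k) (t := t)
    (pow_ne_zero _ (by linarith)) (by linarith) ?_
  push_cast
  rwa [← ht]

/-- on the bands `{x < 0 : p(x) ≤ 0}` both eigenvalues of `Φ(x)` lie on the
unit circle. -/
theorem stmt5 (k : ℕ) (hk : 1 ≤ k) (α β : Fin k → ℝ)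
    (hα : ∀ m, 0 < α m) (hβ : ∀ m, 0 < β m)
    (hprod : ∏ m, α m = ∏ m, β m)
    (p : Polynomial ℝ)
    (hp : ∀ z : ℂ, Polynomial.aeval z p
        = (Matrix.trace (aztecT α β z)) ^ 2 - 4 * (z - 1) ^ (2 * k))
    (x : ℝ) (hx : x < 0) (hpx : p.eval x ≤ 0) :
    ∀ lam : ℂ,
      ((x : ℂ) - 1) ^ k * lam ^ 2 - Matrix.trace (aztecT α β (x : ℂ)) * lam
          + ((x : ℂ) - 1) ^ k = 0 →
      ‖lam‖ = 1 :=
  stmt5_general k α β p hp x hx hpx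
end

section
/- Let F be a field and let a, b, c, α, β, γ, z ∈ F with z ≠ 0, a ≠ 0, α ≠ 0, d := ac + γα⁻¹ ≠ 0 and x := (aβ + bα⁻¹)/d ≠ 0. Then the 2×2 matrix identity [[a, b z⁻¹],[c, a⁻¹]] · [[α, β z⁻¹],[γ, α⁻¹]] = [[a, γ x z⁻¹],[β x⁻¹, a⁻¹]] · [[α, c x z⁻¹],[b x⁻¹, α⁻¹]] holds. -/
/-! Multiplying out, the diagonal entries agree because the factors `x` and `x⁻¹` cancel, and both
off-diagonal entries reduce to the relation `x * (a * c * α + γ) = a * β * α + b`, which is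
`x * d = a * β + b * α⁻¹` scaled by `α`. -/

theorem switch_mul_eq_of_mul_eq {F : Type*} [Field F] {a b c α β γ x : F} (w : F)
    (ha : a ≠ 0) (hα : α ≠ 0) (hx : x ≠ 0) (hxd : x * (a * c * α + γ) = a * β * α + b) :
    (!![a, b * w; c, a⁻¹] : Matrix (Fin 2) (Fin 2) F) * !![α, β * w; γ, α⁻¹]
      = !![a, γ * x * w; β * x⁻¹, a⁻¹] * !![α, c * x * w; b * x⁻¹, α⁻¹] := by
  simp only [Matrix.mul_fin_two, EmbeddingLike.apply_eq_iff_eq, Matrix.vecCons_inj, and_true]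
  refine ⟨⟨?_, ?_⟩, ?_, ?_⟩
  · field_simp
  · field_simp
    linear_combination (-w) * hxd
  · field_simp
    linear_combination hxd
  · field_simp

theorem stmt9_general (F : Type*) [Field F] (a b c α β γ z d x : F)
    (ha : a ≠ 0) (hα : α ≠ 0)
    (hd : d = a * c + γ * α⁻¹) (hdne : d ≠ 0)
    (hx : x = (a * β + b * α⁻¹) / d) (hxne : x ≠ 0) :
    (!![a, b * z⁻¹; c, a⁻¹] : Matrix (Fin 2) (Fin 2) F) * !![α, β * z⁻¹; γ, α⁻¹]
      = !![a, γ * x * z⁻¹; β * x⁻¹, a⁻¹] * !![α, c * x * z⁻¹; b * x⁻¹, α⁻¹] := by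
  refine switch_mul_eq_of_mul_eq z⁻¹ ha hα hxne ?_
  calc x * (a * c * α + γ) = x * d * α := by rw [hd]; field_simp
    _ = (a * β + b * α⁻¹) * α := by rw [hx, div_mul_cancel₀ _ hdne]
    _ = a * β * α + b := by field_simp

/-- the switching rule used in the Wiener–Hopf type factorization:
`[[a, b z⁻¹],[c, a⁻¹]] · [[α, β z⁻¹],[γ, α⁻¹]]
  = [[a, γ x z⁻¹],[β x⁻¹, a⁻¹]] · [[α, c x z⁻¹],[b x⁻¹, α⁻¹]]`
with `x = (aβ + bα⁻¹)/(ac + γα⁻¹)`. -/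
theorem stmt9 (F : Type*) [Field F] (a b c α β γ z d x : F)
    (hz : z ≠ 0) (ha : a ≠ 0) (hα : α ≠ 0)
    (hd : d = a * c + γ * α⁻¹) (hdne : d ≠ 0)
    (hx : x = (a * β + b * α⁻¹) / d) (hxne : x ≠ 0) :
    (!![a, b * z⁻¹; c, a⁻¹] : Matrix (Fin 2) (Fin 2) F) * !![α, β * z⁻¹; γ, α⁻¹]
      = !![a, γ * x * z⁻¹; β * x⁻¹, a⁻¹] * !![α, c * x * z⁻¹; b * x⁻¹, α⁻¹] :=
  stmt9_general F a b c α β γ z d x ha hα hd hdne hx hxne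
end

section
/- Let z ∈ ℂ with Im z > 0, let c > 0 be a real number, and let ξ ∈ ℂ with 0 < arg ξ < arg z (principal argument). Then 0 < arg(z + cξ) − arg(1 + cξ) < arg z. In particular, the Möbius transformation ξ ↦ (z + cξ)/(1 + cξ) maps the open cone C_z = {ξ ∈ ℂ : 0 < arg ξ < arg z} into itself. -/
open Complex Real

private lemma ne0_of_im_pos {a : ℂ} (h : 0 < a.im) : a ≠ 0 := by
  intro h0; rw [h0] at h; simp at h

private lemma arg_pos_of_im_pos {a : ℂ} (h : 0 < a.im) : 0 < a.arg := by
  rcases lt_or_eq_of_le (Complex.arg_nonneg_iff.2 h.le) with h' | h'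
  · exact h'
  · exfalso
    have := Complex.arg_eq_zero_iff.1 h'.symm
    linarith [this.2]

private lemma arg_lt_pi_of_im_pos {a : ℂ} (h : 0 < a.im) : a.arg < π := by
  rcases lt_or_eq_of_le (Complex.arg_le_pi a) with h' | h'
  · exact h'
  · exfalso
    have := Complex.arg_eq_pi_iff.1 h'
    linarith [this.2]

private lemma im_pos_of_arg {a : ℂ} (h1 : 0 < a.arg) (h2 : a.arg < π) : 0 < a.im := by
  by_contra h
  push_neg at h
  rcases lt_or_eq_of_le h with h' | h'
  · have := Complex.arg_neg_iff.2 h'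
    linarith
  · have h0 : a.arg = 0 ∨ a.arg = π := by
      rcases le_or_gt 0 a.re with hr | hr
      · exact Or.inl (Complex.arg_eq_zero_iff.2 ⟨hr, h'⟩)
      · exact Or.inr (Complex.arg_eq_pi_iff.2 ⟨hr, h'⟩)
    rcases h0 with h0 | h0 <;> linarith

private lemma arg_div_of_im_pos {a b : ℂ} (ha : 0 < a.im) (hb : 0 < b.im) :
    (a / b).arg = a.arg - b.arg := by
  have ha0 : a ≠ 0 := ne0_of_im_pos ha
  have hb0 : b ≠ 0 := ne0_of_im_pos hb
  have h1 : (((a / b).arg : Real.Angle)) = ((a.arg - b.arg : ℝ) : Real.Angle) := by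
    rw [Complex.arg_div_coe_angle ha0 hb0, Real.Angle.coe_sub]
  have h2 : a.arg - b.arg ∈ Set.Ioc (-π) π := by
    constructor
    · have := arg_lt_pi_of_im_pos ha
      have := arg_pos_of_im_pos ha
      have := arg_lt_pi_of_im_pos hb
      linarith
    · have := arg_lt_pi_of_im_pos ha
      have := arg_pos_of_im_pos hb
      linarith
  calc (a / b).arg = (((a / b).arg : Real.Angle)).toReal := by
        rw [Complex.arg_coe_angle_toReal_eq_arg]
    _ = ((a.arg - b.arg : ℝ) : Real.Angle).toReal := by rw [h1]
    _ = a.arg - b.arg := Real.Angle.toReal_coe_eq_self_iff_mem_Ioc.2 h2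

/-- cone invariance: for `Im z > 0`, `c > 0` and `0 < arg ξ < arg z` one has
`0 < arg(z + cξ) − arg(1 + cξ) < arg z`; in particular the Möbius transformation
`ξ ↦ (z + cξ)/(1 + cξ)` maps the cone `C_z = {ξ : 0 < arg ξ < arg z}` into itself. -/
theorem stmt11 (z : ℂ) (hz : 0 < z.im) (c : ℝ) (hc : 0 < c) (ξ : ℂ)
    (h1 : 0 < ξ.arg) (h2 : ξ.arg < z.arg) :
    (0 < (z + (c : ℂ) * ξ).arg - (1 + (c : ℂ) * ξ).arg ∧
      (z + (c : ℂ) * ξ).arg - (1 + (c : ℂ) * ξ).arg < z.arg) ∧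
    (0 < ((z + (c : ℂ) * ξ) / (1 + (c : ℂ) * ξ)).arg ∧
      ((z + (c : ℂ) * ξ) / (1 + (c : ℂ) * ξ)).arg < z.arg) := by
  set w : ℂ := (c : ℂ) * ξ with hw
  have hzpi : z.arg < π := arg_lt_pi_of_im_pos hz
  have hξim : 0 < ξ.im := im_pos_of_arg h1 (lt_trans h2 hzpi)
  have hwim : 0 < w.im := by
    have h : w.im = c * ξ.im := by simp [hw]
    rw [h]; positivity
  have hargw : w.arg = ξ.arg := Complex.arg_real_mul ξ hc
  have hwz : w.arg < z.arg := by rw [hargw]; exact h2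
  have hwpos : 0 < w.arg := by rw [hargw]; exact h1
  -- key inequality: Im (z * conj w) > 0
  have hdzw : (z / w).arg = z.arg - w.arg := arg_div_of_im_pos hz hwim
  have hzw_im : 0 < (z / w).im := by
    apply im_pos_of_arg
    · rw [hdzw]; linarith
    · rw [hdzw]; linarith
  have hns : 0 < Complex.normSq w := Complex.normSq_pos.2 (ne0_of_im_pos hwim)
  have hk : 0 < z.im * w.re - z.re * w.im := by
    have h := hzw_im
    rw [Complex.div_im] at h
    have h' := mul_pos h hns
    rw [sub_mul, div_mul_cancel₀ _ hns.ne', div_mul_cancel₀ _ hns.ne'] at h'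
    exact h'
  -- A and B
  have hAim : 0 < (z + w).im := by simp [Complex.add_im]; linarith
  have hBim : 0 < ((1 : ℂ) + w).im := by simp [Complex.add_im]; linarith
  have hnsB : 0 < Complex.normSq (1 + w) := Complex.normSq_pos.2 (ne0_of_im_pos hBim)
  have hnsz : 0 < Complex.normSq z := Complex.normSq_pos.2 (ne0_of_im_pos hz)
  -- arg of the quotient equals the difference of args
  have hargdiv : ((z + w) / (1 + w)).arg = (z + w).arg - (1 + w).arg :=
    arg_div_of_im_pos hAim hBim
  -- Im of the quotient is positive
  have hQim : 0 < ((z + w) / (1 + w)).im := by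
    rw [Complex.div_im]
    have hnum : 0 < (z + w).im * (1 + w).re - (z + w).re * (1 + w).im := by
      simp only [Complex.add_im, Complex.add_re, Complex.one_re, Complex.one_im]
      nlinarith [hz, hwim, hk]
    rw [← sub_div] at *
    · exact div_pos hnum hnsB
  have hQpos : 0 < ((z + w) / (1 + w)).arg := arg_pos_of_im_pos hQim
  -- Im ((z+w)/z) < 0
  have hRim : ((z + w) / z).im < 0 := by
    rw [Complex.div_im, ← sub_div]
    apply div_neg_of_neg_of_pos _ hnsz
    simp only [Complex.add_im, Complex.add_re]
    nlinarith [hk]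
  have hRneg : ((z + w) / z).arg < 0 := Complex.arg_neg_iff.2 hRim
  have hRd : ((z + w) / z).arg = (z + w).arg - z.arg := arg_div_of_im_pos hAim hz
  have hBpos : 0 < ((1 : ℂ) + w).arg := arg_pos_of_im_pos hBim
  have key1 : 0 < (z + w).arg - (1 + w).arg := by rw [← hargdiv]; exact hQpos
  have key2 : (z + w).arg - (1 + w).arg < z.arg := by
    have : (z + w).arg - z.arg < 0 := by rw [← hRd]; exact hRneg
    linarith
  refine ⟨⟨key1, key2⟩, ?_, ?_⟩ <;> rw [hargdiv]
  · exact key1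
  · exact key2
end

section
/- For every z ∈ H with Im z > 0, one has Im( z · ρ′(z) / ρ(z) ) ≠ 0, where ρ′ denotes the complex derivative of ρ. -/
open Polynomial Matrix

/-!
Write `P = Tr T`, `G = z ρ'/ρ` and, for `ε = ±1`, `s_ε = P - 2ε (z-1)^k`. The eigenvalue equation
reads `s_ε ρ = (z-1)^k (ρ-ε)²`; taking logarithmic derivatives,
`u_ε := z s_ε'/s_ε - k z/(z-1) = G (ρ+ε)/(ρ-ε)`, so that `u₊ u₋ = G²`.

Every zero of `s_ε` is a zero of the discriminant `P² - 4 det T = P² - 4 (z-1)^(2k)` and lies on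
`(-∞, 0]`: in the upper half-plane it would force `ρ = ±1`, the lower half-plane follows by
conjugation, and on `(0, ∞)` the matrix `T` has positive entries, so its discriminant is positive.
Hence `Im (z s_ε'/s_ε) = Σ Im (z/(z-a)) ≥ 0` over the zeros `a`, while `Im (-k z/(z-1)) > 0`, so
`Im u_ε > 0`. A product of two points of the upper half-plane is never a nonnegative real, so `G`
cannot be real.
-/

-- In `ComplexOrder`, `a ≤ 0` means that `a` is a nonpositive real.
open scoped ComplexOrder ComplexConjugate Topology

namespace Complex

lemma im_div_sub_ofReal (z : ℂ) (a : ℝ) : (z / (z - a)).im = -a * z.im / normSq (z - a) := by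
  simp only [div_im, sub_re, sub_im, ofReal_re, ofReal_im, sub_zero]
  ring

lemma not_nonneg_mul_of_im_pos {u v : ℂ} (hu : 0 < u.im) (hv : 0 < v.im) : ¬ 0 ≤ u * v := by
  rw [nonneg_iff, mul_re, mul_im]
  rintro ⟨hre, him⟩
  have : u.im * (u.re * v.re - u.im * v.im) = -(u.re ^ 2 + u.im ^ 2) * v.im := by
    linear_combination (-u.re) * him
  nlinarith [mul_nonneg hu.le hre, mul_pos (mul_pos hu hu) hv, mul_nonneg (sq_nonneg u.re) hv.le]

end Complex

-- The roots of the palindromic quadratic are `r` and `r⁻¹`, so a double root is `±1`.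
lemma sq_eq_one_of_discrim_eq_zero {K : Type*} [Field K] [NeZero (2 : K)] {b c r : K}
    (hc : c ≠ 0) (hd : discrim c b c = 0) (hr : c * (r * r) + b * r + c = 0) : r ^ 2 = 1 := by
  rw [discrim] at hd
  have h : 2 * c * r + b = 0 := pow_eq_zero_iff two_ne_zero |>.mp <| by
    linear_combination 4 * c * hr + hd
  have : (2 * c) ^ 2 * (r ^ 2 - 1) = 0 := by linear_combination (2 * c * r - b) * h + hd
  rw [mul_eq_zero, sub_eq_zero] at this
  exact this.resolve_left (pow_ne_zero 2 (mul_ne_zero two_ne_zero hc))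

namespace Polynomial

theorem im_mul_logDeriv_nonneg {p : ℂ[X]} (hp : ∀ a ∈ p.roots, a ≤ 0) {z : ℂ} (hz : 0 ≤ z.im) :
    0 ≤ (z * logDeriv (fun w => p.eval w) z).im := by
  by_cases hpz : p.eval z = 0
  · simp [logDeriv_apply, hpz]
  rw [logDeriv_apply, Polynomial.deriv,
    (IsAlgClosed.splits p).eval_derivative_div_eval_of_ne_zero hpz, ← Multiset.sum_map_mul_left]
  change 0 ≤ Complex.imAddGroupHom _
  rw [map_multiset_sum, Multiset.map_map]
  refine Multiset.sum_nonneg fun t ht => ?_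
  obtain ⟨a, ha, rfl⟩ := Multiset.mem_map.mp ht
  obtain ⟨hare, haim⟩ := Complex.nonpos_iff.mp (hp a ha)
  have ha_real : a = (a.re : ℂ) := Complex.ext rfl (by simp [haim])
  change 0 ≤ (z * (1 / (z - a))).im
  rw [mul_one_div, ha_real, Complex.im_div_sub_ofReal]
  exact div_nonneg (mul_nonneg (neg_nonneg.mpr hare) hz) (Complex.normSq_nonneg _)

theorem im_mul_logDeriv_sub_pos {p : ℂ[X]} (hp : ∀ a ∈ p.roots, a ≤ 0) {k : ℕ} (hk : k ≠ 0)
    {z : ℂ} (hz : 0 < z.im) : 0 < (z * logDeriv (fun w => p.eval w) z - k * z / (z - 1)).im := by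
  have hz1 : z - 1 ≠ 0 := fun h => by simp [sub_eq_zero.mp h] at hz
  have hpole : (k * z / (z - 1)).im < 0 := by
    rw [mul_div_assoc, ← Complex.ofReal_natCast, Complex.im_ofReal_mul, ← Complex.ofReal_one,
      Complex.im_div_sub_ofReal, Complex.ofReal_one, neg_one_mul, neg_div]
    exact mul_neg_of_pos_of_neg (Nat.cast_pos.mpr (Nat.pos_of_ne_zero hk))
      (neg_neg_of_pos (div_pos hz (Complex.normSq_pos.mpr hz1)))
  rw [Complex.sub_im]
  linarith [im_mul_logDeriv_nonneg hp hz.le]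

end Polynomial

lemma mul_logDeriv_sub_eq_of_mul_eq {f ρ : ℂ → ℂ} {z ε : ℂ} {k : ℕ}
    (hf : DifferentiableAt ℂ f z) (hρ : DifferentiableAt ℂ ρ z)
    (h : (fun w => f w * ρ w) =ᶠ[𝓝 z] fun w => (w - 1) ^ k * (ρ w - ε) ^ 2)
    (hf0 : f z ≠ 0) (hz : z - 1 ≠ 0) (hρ0 : ρ z ≠ 0) (hρε : ρ z - ε ≠ 0) :
    z * logDeriv f z - k * z / (z - 1) = z * logDeriv ρ z * ((ρ z + ε) / (ρ z - ε)) := by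
  have hlog := (logDeriv_congr_nhds h).eq_of_nhds
  rw [logDeriv_mul z hf0 hρ0 hf hρ,
    logDeriv_mul (f := fun w => (w - 1) ^ k) (g := fun w => (ρ w - ε) ^ 2) z
      (pow_ne_zero _ hz) (pow_ne_zero _ hρε) (by fun_prop) (by fun_prop),
    logDeriv_fun_pow (by fun_prop), logDeriv_fun_pow (by fun_prop)] at hlog
  simp only [logDeriv_apply, deriv_sub_const, deriv_id''] at hlog ⊢
  field_simp
  field_simp at hlog
  linear_combination z * hlog

lemma Matrix.mul_apply_pos {l m n R : Type*} [Fintype m] [Nonempty m] [Semiring R]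
    [PartialOrder R] [IsStrictOrderedRing R] {M : Matrix l m R} {N : Matrix m n R}
    (hM : ∀ i j, 0 < M i j) (hN : ∀ i j, 0 < N i j) (i : l) (j : n) : 0 < (M * N) i j :=
  Finset.sum_pos (fun r _ => mul_pos (hM i r) (hN r j)) Finset.univ_nonempty

lemma Matrix.four_mul_det_lt_trace_sq {R : Type*} [CommRing R] [LinearOrder R]
    [IsStrictOrderedRing R] (M : Matrix (Fin 2) (Fin 2) R) (h : 0 < M 0 1 * M 1 0) :
    4 * M.det < M.trace ^ 2 := by
  rw [det_fin_two, trace_fin_two]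
  nlinarith [sq_nonneg (M 0 0 - M 1 1)]

noncomputable def aztecAPoly (a b : ℝ) : Matrix (Fin 2) (Fin 2) ℝ[X] :=
  !![X + C (a / b), C (a + b); X * C (a⁻¹ + b⁻¹), X + C (b / a)]

noncomputable def aztecTPoly {k : ℕ} (α β : Fin k → ℝ) : Matrix (Fin 2) (Fin 2) ℝ[X] :=
  (List.ofFn fun m => aztecAPoly (α m) (β m)).prod

noncomputable def aztecDisc {k : ℕ} (α β : Fin k → ℝ) : ℝ[X] :=
  (aztecTPoly α β).trace ^ 2 - 4 * (aztecTPoly α β).det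

section AztecPolynomial

variable {k : ℕ} {α β : Fin k → ℝ}

lemma aztecA_eq_map_aeval (a b : ℝ) (z : ℂ) : aztecA a b z = (aztecAPoly a b).map (aeval z) := by
  ext i j
  fin_cases i <;> fin_cases j <;> simp [aztecA, aztecAPoly, div_eq_mul_inv]

lemma aztecT_eq_map_aeval (z : ℂ) :
    aztecT α β z = (aztecTPoly α β).map (aeval z) := by
  rw [aztecT, aztecTPoly, ← AlgHom.mapMatrix_apply, map_list_prod, List.map_ofFn]
  simp [Function.comp_def, aztecA_eq_map_aeval]

lemma det_aztecAPoly {a b : ℝ} (ha : a ≠ 0) (hb : b ≠ 0) : (aztecAPoly a b).det = (X - 1) ^ 2 := by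
  have h1 : C (a / b) * C (b / a) = (1 : ℝ[X]) := by
    rw [← C_mul, ← C_1]; congr 1; field_simp
  have h2 : C (a + b) * C (a⁻¹ + b⁻¹) = C (a / b) + C (b / a) + (2 : ℝ[X]) := by
    rw [← C_mul, ← C_ofNat, ← C_add, ← C_add]; congr 1; field_simp; ring
  rw [aztecAPoly, det_fin_two_of]
  linear_combination h1 - X * h2

lemma det_aztecTPoly (hα : ∀ m, α m ≠ 0) (hβ : ∀ m, β m ≠ 0) :
    (aztecTPoly α β).det = ((X - 1) ^ k) ^ 2 := by
  rw [aztecTPoly, ← coe_detMonoidHom, map_list_prod, List.map_ofFn, List.prod_ofFn]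
  simp [det_aztecAPoly (hα _) (hβ _), ← pow_mul, mul_comm]

lemma aztecTPoly_eval_pos (hk : k ≠ 0) (hα : ∀ m, 0 < α m) (hβ : ∀ m, 0 < β m) {x : ℝ}
    (hx : 0 < x) (i j : Fin 2) : 0 < (aztecTPoly α β).map (eval x) i j := by
  rw [aztecTPoly, ← coe_evalRingHom, ← RingHom.mapMatrix_apply, map_list_prod, List.map_ofFn]
  refine List.prod_induction_nonempty (fun M : Matrix (Fin 2) (Fin 2) ℝ => ∀ i j, 0 < M i j)
    (fun M N hM hN => Matrix.mul_apply_pos hM hN) (by simpa using hk) ?_ i j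
  simp only [List.mem_ofFn, Function.comp_apply, forall_exists_index, forall_apply_eq_imp_iff]
  intro m i j
  have := hα m; have := hβ m
  fin_cases i <;> fin_cases j <;> simp [aztecAPoly] <;> positivity

lemma eval_aztecDisc_pos (hk : k ≠ 0) (hα : ∀ m, 0 < α m) (hβ : ∀ m, 0 < β m) {x : ℝ}
    (hx : 0 < x) : 0 < (aztecDisc α β).eval x := by
  have hM := aztecTPoly_eval_pos hk hα hβ hx
  have := (aztecTPoly α β).map (eval x) |>.four_mul_det_lt_trace_sq (mul_pos (hM 0 1) (hM 1 0))
  rw [aztecDisc, eval_sub, eval_pow, eval_mul, ← coe_evalRingHom, AddMonoidHom.map_trace,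
    RingHom.map_det]
  simpa

lemma aeval_aztecDisc (hα : ∀ m, α m ≠ 0) (hβ : ∀ m, β m ≠ 0) (z : ℂ) :
    aeval z (aztecDisc α β) = trace (aztecT α β z) ^ 2 - 4 * ((z - 1) ^ k) ^ 2 := by
  rw [aztecDisc, map_sub, map_pow, map_mul, AddMonoidHom.map_trace, det_aztecTPoly hα hβ,
    aztecT_eq_map_aeval]
  simp [map_ofNat]

end AztecPolynomial

lemma ne_of_one_lt_norm_of_sq_eq_one {K : Type*} [NormedDivisionRing K] {w ε : K}
    (hw : 1 < ‖w‖) (hε : ε ^ 2 = 1) : w ≠ ε := by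
  rintro rfl
  have : ‖w‖ ^ 2 = 1 := by rw [← norm_pow, hε, norm_one]
  nlinarith [norm_nonneg w]

section Eigenvalue

variable {k : ℕ} {α β : Fin k → ℝ} {ρ : ℂ → ℂ}

lemma aeval_aztecDisc_ne_zero_of_im_pos (hα : ∀ m, α m ≠ 0) (hβ : ∀ m, β m ≠ 0)
    (heig : ∀ z : ℂ, 0 < z.im →
      (z - 1) ^ k * (ρ z) ^ 2 - Matrix.trace (aztecT α β z) * ρ z + (z - 1) ^ k = 0)
    (habs : ∀ z : ℂ, 0 < z.im → 1 < ‖ρ z‖) {z : ℂ} (hz : 0 < z.im) :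
    aeval z (aztecDisc α β) ≠ 0 := by
  rw [aeval_aztecDisc hα hβ]
  intro hd
  have hc : (z - 1) ^ k ≠ 0 := pow_ne_zero _ fun h => by simp [sub_eq_zero.mp h] at hz
  have := sq_eq_one_of_discrim_eq_zero hc (b := -trace (aztecT α β z)) (r := ρ z)
    (by rw [discrim]; linear_combination hd) (by linear_combination heig z hz)
  exact ne_of_one_lt_norm_of_sq_eq_one (habs z hz) this rfl

lemma nonpos_of_aeval_aztecDisc_eq_zero (hk : k ≠ 0) (hα : ∀ m, 0 < α m) (hβ : ∀ m, 0 < β m)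
    (heig : ∀ z : ℂ, 0 < z.im →
      (z - 1) ^ k * (ρ z) ^ 2 - Matrix.trace (aztecT α β z) * ρ z + (z - 1) ^ k = 0)
    (habs : ∀ z : ℂ, 0 < z.im → 1 < ‖ρ z‖) {a : ℂ} (ha : aeval a (aztecDisc α β) = 0) :
    a ≤ 0 := by
  have hne : ∀ z : ℂ, 0 < z.im → aeval z (aztecDisc α β) ≠ 0 := fun z =>
    aeval_aztecDisc_ne_zero_of_im_pos (fun m => (hα m).ne') (fun m => (hβ m).ne') heig habs
  rcases lt_trichotomy a.im 0 with hlt | hreal | hgt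
  · refine absurd ?_ (hne (conj a) (by simpa using hlt))
    rw [aeval_conj, ha, map_zero]
  · have ha_real : a = (a.re : ℂ) := Complex.ext rfl (by simp [hreal])
    rw [ha_real, show aeval (a.re : ℂ) (aztecDisc α β) = (aztecDisc α β).eval a.re from
      aeval_ofReal _ _] at ha
    refine Complex.nonpos_iff.mpr ⟨not_lt.mp fun hre => ?_, hreal⟩
    exact (eval_aztecDisc_pos hk hα hβ hre).ne' (by exact_mod_cast ha)
  · exact absurd ha (hne a hgt)

lemma im_pos_of_aztec_eigenvalue (hk : k ≠ 0) (hα : ∀ m, 0 < α m) (hβ : ∀ m, 0 < β m)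
    (hdiff : ∀ z : ℂ, 0 < z.im → DifferentiableAt ℂ ρ z)
    (heig : ∀ z : ℂ, 0 < z.im →
      (z - 1) ^ k * (ρ z) ^ 2 - Matrix.trace (aztecT α β z) * ρ z + (z - 1) ^ k = 0)
    (habs : ∀ z : ℂ, 0 < z.im → 1 < ‖ρ z‖) {ε : ℂ} (hε : ε ^ 2 = 1) {z : ℂ} (hz : 0 < z.im) :
    0 < (z * logDeriv ρ z * ((ρ z + ε) / (ρ z - ε))).im := by
  set S : ℂ[X] := (aztecTPoly α β).trace.map (algebraMap ℝ ℂ) - C (2 * ε) * (X - 1) ^ k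
  have hS : ∀ w, S.eval w = trace (aztecT α β w) - 2 * ε * (w - 1) ^ k := fun w => by
    simp [S, eval_map_algebraMap, AddMonoidHom.map_trace, aztecT_eq_map_aeval]
  have hdisc : ∀ w, S.eval w = 0 → aeval w (aztecDisc α β) = 0 := fun w hw => by
    rw [hS] at hw
    rw [aeval_aztecDisc (fun m => (hα m).ne') (fun m => (hβ m).ne')]
    linear_combination (trace (aztecT α β w) + 2 * ε * (w - 1) ^ k) * hw
      + 4 * ((w - 1) ^ k) ^ 2 * hε
  have hroots : ∀ a ∈ S.roots, a ≤ 0 := fun a ha =>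
    nonpos_of_aeval_aztecDisc_eq_zero hk hα hβ heig habs (hdisc a (mem_roots'.mp ha).2)
  have hSz : S.eval z ≠ 0 := fun h =>
    aeval_aztecDisc_ne_zero_of_im_pos (fun m => (hα m).ne') (fun m => (hβ m).ne') heig habs hz
      (hdisc z h)
  have hmul : (fun w => S.eval w * ρ w) =ᶠ[𝓝 z] fun w => (w - 1) ^ k * (ρ w - ε) ^ 2 := by
    filter_upwards [(isOpen_lt continuous_const Complex.continuous_im).mem_nhds hz] with w hw
    rw [hS]
    linear_combination -(heig w hw) - (w - 1) ^ k * hε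
  have hz1 : z - 1 ≠ 0 := fun h => by simp [sub_eq_zero.mp h] at hz
  have hρ0 : ρ z ≠ 0 := fun h => by simpa [h] using (habs z hz).trans' zero_lt_one
  rw [← mul_logDeriv_sub_eq_of_mul_eq S.differentiableAt (hdiff z hz) hmul hSz hz1 hρ0
    (sub_ne_zero.mpr (ne_of_one_lt_norm_of_sq_eq_one (habs z hz) hε))]
  exact S.im_mul_logDeriv_sub_pos hroots hk hz

end Eigenvalue

theorem stmt13_general (k : ℕ) (hk : 1 ≤ k) (α β : Fin k → ℝ)
    (hα : ∀ m, 0 < α m) (hβ : ∀ m, 0 < β m)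
    (ρ : ℂ → ℂ)
    (hdiff : ∀ z : ℂ, 0 < z.im → DifferentiableAt ℂ ρ z)
    (heig : ∀ z : ℂ, 0 < z.im →
        (z - 1) ^ k * (ρ z) ^ 2 - Matrix.trace (aztecT α β z) * ρ z + (z - 1) ^ k = 0)
    (habs : ∀ z : ℂ, 0 < z.im → 1 < ‖ρ z‖) :
    ∀ z : ℂ, 0 < z.im → (z * deriv ρ z / ρ z).im ≠ 0 := by
  intro z hz hG
  have key : ∀ ε : ℂ, ε ^ 2 = 1 → 0 < (z * logDeriv ρ z * ((ρ z + ε) / (ρ z - ε))).im :=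
    fun ε hε => im_pos_of_aztec_eigenvalue (by omega) hα hβ hdiff heig habs hε hz
  refine Complex.not_nonneg_mul_of_im_pos (key 1 (one_pow 2)) (key (-1) neg_one_sq) ?_
  have hρ₁ : ρ z - 1 ≠ 0 := sub_ne_zero.mpr (ne_of_one_lt_norm_of_sq_eq_one (habs z hz) (one_pow 2))
  have hρ₂ : ρ z - -1 ≠ 0 := sub_ne_zero.mpr (ne_of_one_lt_norm_of_sq_eq_one (habs z hz) neg_one_sq)
  have hG_real : z * logDeriv ρ z = ((z * deriv ρ z / ρ z).re : ℂ) := by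
    rw [logDeriv_apply, ← mul_div_assoc]
    exact Complex.ext rfl (by simp [hG])
  calc (0 : ℂ) ≤ (((z * deriv ρ z / ρ z).re ^ 2 : ℝ) : ℂ) :=
        Complex.zero_le_real.mpr (sq_nonneg _)
    _ = _ := by
      rw [Complex.ofReal_pow, ← hG_real]
      field_simp
      ring

/-- if `ρ` is the (holomorphic) eigenvalue of `Φ` of modulus `> 1` on the
upper half-plane, then `Im(z ρ′(z)/ρ(z)) ≠ 0` for every `z` with `Im z > 0`. -/
theorem stmt13 (k : ℕ) (hk : 1 ≤ k) (α β : Fin k → ℝ)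
    (hα : ∀ m, 0 < α m) (hβ : ∀ m, 0 < β m)
    (hprod : ∏ m, α m = ∏ m, β m)
    (ρ : ℂ → ℂ)
    (hdiff : ∀ z : ℂ, 0 < z.im → DifferentiableAt ℂ ρ z)
    (heig : ∀ z : ℂ, 0 < z.im →
        (z - 1) ^ k * (ρ z) ^ 2 - Matrix.trace (aztecT α β z) * ρ z + (z - 1) ^ k = 0)
    (habs : ∀ z : ℂ, 0 < z.im → 1 < ‖ρ z‖) :
    ∀ z : ℂ, 0 < z.im → (z * deriv ρ z / ρ z).im ≠ 0 :=
  stmt13_general k hk α β hα hβ ρ hdiff heig habs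
end
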